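/- For n ≥ m ≥ 0, the word of maximal length containing at most m twos all of whose predecessors in the Young–Fibonacci order have a prefix of ones of length at most n is 1^n 2 1^{n−1} 2 ⋯ 1^{n−m+1} 2 1^{n−m}, and its number of digits equals n + mn − (m² − m)/2. -/

import Mathlib

inductive YFDigit : Type
  | one : YFDigit
  | two : YFDigit
  deriving DecidableEq, Repr

abbrev YFWord := List YFDigit

namespace YFWord

/-- value of a digit -/
def digitVal : YFDigit → ℕ
  | .one => 1
  | .two => 2

/-- digit sum of a word -/
def dsum (v : YFWord) : ℕ := (v.map digitVal).sum

/-- number of 2's in a word -/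
def twos (v : YFWord) : ℕ := v.count YFDigit.two

/-- longest common prefix of two lists -/
def commonPrefix : YFWord → YFWord → YFWord
  | a :: x, b :: y => if a = b then a :: commonPrefix x y else []
  | _, _ => []

/-- longest common suffix -/
def lcs (x y : YFWord) : YFWord := (commonPrefix x.reverse y.reverse).reverse

/-- the prefix of `x` remaining after deleting the longest common suffix of `x` and `y` -/
def rem (x y : YFWord) : YFWord := x.take (x.length - (lcs x y).length)

/-- the Young–Fibonacci order: x ≤ y iff, after removing the longest common suffix,
the remaining prefix of `y` has at least as many 2's as the remaining prefix of `x` has digits -/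
def yfLE (x y : YFWord) : Prop := (rem x y).length ≤ twos (rem y x)

/-- strict Young–Fibonacci order -/
def yfLT (x y : YFWord) : Prop := yfLE x y ∧ ¬ yfLE y x

/-- `y` covers `x` in the Young–Fibonacci order -/
def covers (x y : YFWord) : Prop := yfLT x y ∧ ∀ z, ¬ (yfLT x z ∧ yfLT z y)

end YFWord

open YFWord

namespace YFWord

/-- the word 1^n 2 1^{n-1} 2 ⋯ 1^{n-m+1} 2 1^{n-m} -/
def stair : ℕ → ℕ → YFWord
  | n, 0 => List.replicate n YFDigit.one
  | n, m + 1 => List.replicate n YFDigit.one ++ YFDigit.two :: stair (n - 1) m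

/-- the length of the maximal prefix of ones of a word -/
def onesPrefixLen (v : YFWord) : ℕ := (v.takeWhile (fun d => d == YFDigit.one)).length

end YFWord

/-!
A word `w` has a predecessor `z` with many leading ones only through a split `w = u ++ s` in
which `s` is the common suffix of `z` and `w`: then `z = z' ++ s` with `|z'| ≤ twos u`, so `z`
has at most `twos u + onesPrefixLen s` leading ones, and `1^(twos u) ++ s` attains this bound.
Hence all predecessors of `w` have at most `n` leading ones iff `twos u + onesPrefixLen s ≤ n`
for every split `w = u ++ s`. For `w = 1^a 2 w'` this means `a ≤ n` together with the same
condition for `w'` and `n - 1`, and an induction on the number of 2's shows that the longest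
such word with at most `m` twos is obtained by taking `a = n` at every step, i.e. `stair n m`.
-/

namespace YFWord

open List

section Suffix

theorem commonPrefix_comm : ∀ x y : YFWord, commonPrefix x y = commonPrefix y x
  | [], [] | [], _ :: _ | _ :: _, [] => rfl
  | a :: x, b :: y => by
    by_cases hab : a = b
    · subst hab
      simp [commonPrefix, commonPrefix_comm x y]
    · simp [commonPrefix, hab, Ne.symm hab]

theorem commonPrefix_prefix_left : ∀ x y : YFWord, commonPrefix x y <+: x
  | [], _ | _ :: _, [] => by simp [commonPrefix]
  | a :: x, b :: y => by
    by_cases hab : a = b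
    · subst hab
      simpa [commonPrefix] using commonPrefix_prefix_left x y
    · simp [commonPrefix, hab]

theorem prefix_commonPrefix : ∀ {p x y : YFWord}, p <+: x → p <+: y → p <+: commonPrefix x y
  | [], _, _, _, _ => nil_prefix
  | a :: p, _, _, ⟨tx, rfl⟩, ⟨ty, rfl⟩ => by
    simpa [commonPrefix] using prefix_commonPrefix (prefix_append p tx) (prefix_append p ty)

theorem lcs_comm (x y : YFWord) : lcs x y = lcs y x := by
  rw [lcs, lcs, commonPrefix_comm]

theorem lcs_suffix_left (x y : YFWord) : lcs x y <:+ x := by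
  rw [lcs, ← reverse_prefix, reverse_reverse]
  exact commonPrefix_prefix_left _ _

theorem suffix_lcs {v x y : YFWord} (hx : v <:+ x) (hy : v <:+ y) : v <:+ lcs x y := by
  rw [← reverse_prefix] at hx hy ⊢
  simpa [lcs] using prefix_commonPrefix hx hy

theorem rem_append_lcs (x y : YFWord) : rem x y ++ lcs x y = x := by
  obtain ⟨t, ht⟩ := lcs_suffix_left x y
  have hlen : x.length - (lcs x y).length = t.length := by
    have := congrArg length ht
    rw [length_append] at this
    omega
  have htake : x.take t.length = t := by
    rw [← ht]
    exact take_left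
  rw [rem, hlen, htake, ht]

theorem exists_rem_append_eq_of_append_eq {x y x' y' v : YFWord} (hx : x' ++ v = x)
    (hy : y' ++ v = y) : ∃ t, rem x y ++ t = x' ∧ rem y x ++ t = y' := by
  obtain ⟨t, ht⟩ := suffix_lcs ⟨x', hx⟩ ⟨y', hy⟩
  refine ⟨t, append_cancel_right (bs := v) ?_, append_cancel_right (bs := v) ?_⟩
  · rw [append_assoc, ht, rem_append_lcs, hx]
  · rw [append_assoc, ht, lcs_comm, rem_append_lcs, hy]

end Suffix

section Counting

@[simp]
theorem twos_nil : twos [] = 0 := rfl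

@[simp]
theorem twos_append (a b : YFWord) : twos (a ++ b) = twos a + twos b :=
  count_append ..

@[simp]
theorem twos_cons_one (w : YFWord) : twos (.one :: w) = twos w := by
  simp [twos]

@[simp]
theorem twos_cons_two (w : YFWord) : twos (.two :: w) = twos w + 1 := by
  simp [twos]

@[simp]
theorem twos_replicate_one (k : ℕ) : twos (replicate k .one) = 0 := by
  simp [twos, count_replicate]

theorem eq_replicate_one_or_exists_eq_replicate_one_append_two :
    ∀ w : YFWord, w = replicate w.length .one ∨ ∃ a w', w = replicate a .one ++ .two :: w'
  | [] => .inl rfl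
  | .two :: w => .inr ⟨0, w, rfl⟩
  | .one :: w => by
    rcases eq_replicate_one_or_exists_eq_replicate_one_append_two w with h | ⟨a, w', h⟩
    · exact .inl (by rw [length_cons, replicate_succ, ← h])
    · exact .inr ⟨a + 1, w', by rw [h, replicate_succ, cons_append]⟩

@[simp]
theorem onesPrefixLen_nil : onesPrefixLen [] = 0 := rfl

@[simp]
theorem onesPrefixLen_cons_one (w : YFWord) :
    onesPrefixLen (.one :: w) = onesPrefixLen w + 1 := by
  simp [onesPrefixLen]

@[simp]
theorem onesPrefixLen_cons_two (w : YFWord) : onesPrefixLen (.two :: w) = 0 := by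
  simp [onesPrefixLen]

@[simp]
theorem onesPrefixLen_replicate_one_append (k : ℕ) (w : YFWord) :
    onesPrefixLen (replicate k .one ++ w) = k + onesPrefixLen w := by
  induction k with
  | zero => simp
  | succ k ih => rw [replicate_succ, cons_append, onesPrefixLen_cons_one, ih]; omega

theorem onesPrefixLen_append_le :
    ∀ a b : YFWord, onesPrefixLen (a ++ b) ≤ a.length + onesPrefixLen b
  | [], _ => by simp
  | .two :: _, _ => by simp
  | .one :: a, b => by
    have := onesPrefixLen_append_le a b
    rw [cons_append, onesPrefixLen_cons_one, length_cons]
    omega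

end Counting

section OnesBounded

def OnesBounded (n : ℕ) (w : YFWord) : Prop :=
  ∀ u s, u ++ s = w → twos u + onesPrefixLen s ≤ n

theorem OnesBounded.onesPrefixLen_le {n : ℕ} {w : YFWord} (hw : OnesBounded n w) :
    onesPrefixLen w ≤ n := by
  simpa using hw [] w rfl

theorem yfLE_replicate_one_append {u : YFWord} {k : ℕ} (hk : k ≤ twos u) (v : YFWord) :
    yfLE (replicate k .one ++ v) (u ++ v) := by
  obtain ⟨t, hz, hw⟩ :=
    exists_rem_append_eq_of_append_eq (x' := replicate k .one) (y' := u) (v := v) rfl rfl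
  have hlen := congrArg length hz
  have hzt := congrArg twos hz
  have hwt := congrArg twos hw
  simp only [length_append, length_replicate, twos_append, twos_replicate_one] at hlen hzt hwt
  rw [yfLE]
  omega

theorem onesPrefixLen_le_of_yfLE {n : ℕ} {z w : YFWord} (hw : OnesBounded n w)
    (hzw : yfLE z w) : onesPrefixLen z ≤ n := by
  obtain ⟨t, hz, hw'⟩ :=
    exists_rem_append_eq_of_append_eq (v := []) (append_nil z) (append_nil w)
  calc onesPrefixLen z = onesPrefixLen (rem z w ++ t) := by rw [hz]
    _ ≤ (rem z w).length + onesPrefixLen t := onesPrefixLen_append_le _ _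
    _ ≤ twos (rem w z) + onesPrefixLen t := Nat.add_le_add_right hzw _
    _ ≤ n := hw _ _ hw'

theorem forall_yfLE_onesPrefixLen_le_iff {n : ℕ} {w : YFWord} :
    (∀ z, yfLE z w → onesPrefixLen z ≤ n) ↔ OnesBounded n w := by
  refine ⟨fun h u s hus => ?_, fun hw z => onesPrefixLen_le_of_yfLE hw⟩
  subst hus
  simpa using h _ (yfLE_replicate_one_append le_rfl s)

theorem onesBounded_nil (n : ℕ) : OnesBounded n [] := by
  intro u s hus
  obtain ⟨rfl, rfl⟩ := append_eq_nil_iff.mp hus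
  simp

theorem onesBounded_cons_iff {n : ℕ} {d : YFDigit} {w : YFWord} :
    OnesBounded n (d :: w) ↔ onesPrefixLen (d :: w) ≤ n ∧
      ∀ u s, u ++ s = w → twos (d :: u) + onesPrefixLen s ≤ n := by
  refine ⟨fun h => ⟨h.onesPrefixLen_le, fun u s hus => h _ _ (by rw [cons_append, hus])⟩,
    fun ⟨h₀, h⟩ u s hus => ?_⟩
  rcases cons_eq_append_iff.mp hus.symm with ⟨rfl, rfl⟩ | ⟨u', rfl, rfl⟩
  · simpa [twos] using h₀
  · exact h u' s rfl

theorem onesBounded_cons_one_iff {n : ℕ} {w : YFWord} :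
    OnesBounded n (.one :: w) ↔ onesPrefixLen w + 1 ≤ n ∧ OnesBounded n w := by
  simp only [onesBounded_cons_iff, onesPrefixLen_cons_one, twos_cons_one]
  rfl

theorem onesBounded_succ_cons_two_iff {n : ℕ} {w : YFWord} :
    OnesBounded (n + 1) (.two :: w) ↔ OnesBounded n w := by
  simp only [onesBounded_cons_iff, onesPrefixLen_cons_two, twos_cons_two, Nat.zero_le, true_and,
    add_right_comm _ 1, Nat.add_le_add_iff_right]
  rfl

theorem onesBounded_replicate_one_append_iff {n k : ℕ} {w : YFWord} :
    OnesBounded n (replicate k .one ++ w) ↔ k + onesPrefixLen w ≤ n ∧ OnesBounded n w := by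
  induction k with
  | zero => simpa using fun h => h.onesPrefixLen_le
  | succ k ih =>
    rw [replicate_succ, cons_append, onesBounded_cons_one_iff, ih,
      onesPrefixLen_replicate_one_append]
    constructor
    · rintro ⟨h, -, hw⟩
      exact ⟨by omega, hw⟩
    · rintro ⟨h, hw⟩
      exact ⟨by omega, by omega, hw⟩

theorem onesBounded_replicate_one_iff {n k : ℕ} :
    OnesBounded n (replicate k .one) ↔ k ≤ n := by
  simpa [onesBounded_nil] using onesBounded_replicate_one_append_iff (n := n) (k := k) (w := [])

theorem onesBounded_succ_replicate_one_append_two_iff {n k : ℕ} {w : YFWord} :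
    OnesBounded (n + 1) (replicate k .one ++ .two :: w) ↔ k ≤ n + 1 ∧ OnesBounded n w := by
  rw [onesBounded_replicate_one_append_iff, onesBounded_succ_cons_two_iff,
    onesPrefixLen_cons_two, add_zero]

end OnesBounded

section Stair

theorem stair_succ_succ (n m : ℕ) :
    stair (n + 1) (m + 1) = replicate (n + 1) .one ++ .two :: stair n m := rfl

theorem twos_stair : ∀ n m, twos (stair n m) = m
  | n, 0 => by simp [stair]
  | n, m + 1 => by simp [stair, twos_stair (n - 1) m]

theorem onesBounded_stair : ∀ {n m : ℕ}, m ≤ n → OnesBounded n (stair n m)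
  | n, 0, _ => onesBounded_replicate_one_iff.mpr le_rfl
  | n + 1, m + 1, h => by
    rw [stair_succ_succ, onesBounded_succ_replicate_one_append_two_iff]
    exact ⟨le_rfl, onesBounded_stair (by omega)⟩

theorem two_mul_length_stair : ∀ {n m : ℕ}, m ≤ n →
    2 * (stair n m).length + m * m = 2 * n + 2 * (m * n) + m
  | n, 0, _ => by simp [stair]
  | n + 1, m + 1, h => by
    have ih := two_mul_length_stair (Nat.le_of_succ_le_succ h)
    rw [stair_succ_succ, length_append, length_cons, length_replicate]
    linarith

theorem length_stair {n m : ℕ} (h : m ≤ n) :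
    (stair n m).length = n + m * n - (m ^ 2 - m) / 2 := by
  have := two_mul_length_stair h
  have : m ≤ m ^ 2 := Nat.le_self_pow two_ne_zero m
  rw [sq] at *
  omega

theorem length_lt_length_stair_or_eq_stair {n m : ℕ} {w : YFWord} (hmn : m ≤ n)
    (htw : twos w ≤ m) (hw : OnesBounded n w) :
    w.length < (stair n m).length ∨ w = stair n m := by
  induction m generalizing n w with
  | zero =>
    rcases eq_replicate_one_or_exists_eq_replicate_one_append_two w with hrep | ⟨a, w', rfl⟩
    · have hlen : w.length ≤ n := onesBounded_replicate_one_iff.mp (hrep ▸ hw)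
      rcases hlen.lt_or_eq with hlt | heq
      · exact .inl (by simpa [stair] using hlt)
      · exact .inr (by rw [hrep, heq, stair])
    · simp at htw
  | succ m ih =>
    obtain _ | n := n
    · omega
    rw [stair_succ_succ]
    rcases eq_replicate_one_or_exists_eq_replicate_one_append_two w with hrep | ⟨a, w', rfl⟩
    · have hlen : w.length ≤ n + 1 := onesBounded_replicate_one_iff.mp (hrep ▸ hw)
      refine .inl ?_
      simp only [length_append, length_replicate, length_cons]
      omega
    obtain ⟨ha, hw'⟩ := onesBounded_succ_replicate_one_append_two_iff.mp hw
    simp only [length_append, length_replicate, length_cons]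
    rcases ih (by omega) (by simpa using htw) hw' with hlt | rfl
    · exact .inl (by omega)
    rcases ha.lt_or_eq with hlt | rfl
    · exact .inl (by omega)
    · exact .inr rfl

end Stair

end YFWord

theorem yf_stair_maximal (n m : ℕ) (h : m ≤ n) :
    (twos (stair n m) ≤ m ∧ ∀ z : YFWord, yfLE z (stair n m) → onesPrefixLen z ≤ n) ∧
    (∀ w : YFWord,
      (twos w ≤ m ∧ ∀ z : YFWord, yfLE z w → onesPrefixLen z ≤ n) →
        w.length ≤ (stair n m).length) ∧
    (∀ w : YFWord,
      (twos w ≤ m ∧ ∀ z : YFWord, yfLE z w → onesPrefixLen z ≤ n) →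
        w.length = (stair n m).length → w = stair n m) ∧
    (stair n m).length = n + m * n - (m ^ 2 - m) / 2 := by
  simp only [forall_yfLE_onesPrefixLen_le_iff]
  refine ⟨⟨(twos_stair n m).le, onesBounded_stair h⟩, fun w ⟨htw, hw⟩ => ?_,
    fun w ⟨htw, hw⟩ hlen => ?_, length_stair h⟩
  · rcases length_lt_length_stair_or_eq_stair h htw hw with hlt | rfl
    exacts [hlt.le, le_rfl]
  · exact (length_lt_length_stair_or_eq_stair h htw hw).resolve_left hlen.not_lt
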